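/- Let λ = ℙ(A₀⁺ ∩ A₀⁻) where A₀⁺ is the event that 0 leads to every j > 0 and A₀⁻ the event that every j < 0 leads to 0. Then λ = ∏_{j=1}^∞ [1 − (1−p_1)⋯(1−p_j)]², and λ > 0 if and only if ∑_{k=1}^∞ (1−p_1)⋯(1−p_k) < ∞. -/

import Mathlib

open MeasureTheory ProbabilityTheory Filter

/-- Configuration: edge indicators. -/
abbrev Cfg := ℤ → ℤ → Bool

/-- There is an edge from `i` to `j`. -/
def Edge (ω : Cfg) (i j : ℤ) : Prop := i < j ∧ ω i j = true

/-- There is a directed path from `i` to `j`. -/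
def Leads (ω : Cfg) : ℤ → ℤ → Prop := Relation.TransGen (Edge ω)

/-- A list of vertices forming a path inside `{a,...,b}`. -/
def IsPathIn (ω : Cfg) (a b : ℤ) (l : List ℤ) : Prop :=
  l ≠ [] ∧ l.Chain' (Edge ω) ∧ ∀ x ∈ l, a ≤ x ∧ x ≤ b

/-- `L ω a b`: maximal number of edges of a path contained in `{a,...,b}`. -/
noncomputable def L (ω : Cfg) (a b : ℤ) : ℕ :=
  sSup {n | ∃ l : List ℤ, IsPathIn ω a b l ∧ l.length = n + 1}

/-- `T ω i j`: maximal number of edges of a path from `i` to `j` (0 if none). -/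
noncomputable def T (ω : Cfg) (i j : ℤ) : ℕ :=
  sSup {n | ∃ l : List ℤ, l.Chain' (Edge ω) ∧ l.head? = some i ∧
    l.getLast? = some j ∧ l.length = n + 1}

/-- The skeleton of the graph. -/
def Skel (ω : Cfg) : Set ℤ :=
  {n | (∀ j, n < j → Leads ω n j) ∧ (∀ j, j < n → Leads ω j n)}

/-- The model hypotheses: independent edges, edge `(i,j)` present w.p. `p (j-i)`. -/
def GraphModel (p : ℕ → ℝ) (μ : Measure Cfg) : Prop :=
  IsProbabilityMeasure μ ∧
  iIndepFun (fun (e : ℤ × ℤ) (ω : Cfg) => (ω e.1 e.2 : Bool)) μ ∧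
  (∀ i j : ℤ, i < j → μ {ω | ω i j = true} = ENNReal.ofReal (p (j - i).toNat)) ∧
  (∀ i j : ℤ, j ≤ i → μ {ω | ω i j = true} = 0)

/-!
By the characterisation of `Leads` through last (resp. first) edges, `A₀⁺ ∩ A₀⁻` is the event
that every `v = n + 1 > 0` receives an edge from `{0, …, n}` and every `v = -(n + 1) < 0` sends
an edge into `{-n, …, 0}`. These events are determined by pairwise disjoint sets of edges, hence
are independent, and each fails with probability `q n = (1 - p 1) ⋯ (1 - p (n + 1))`. Continuity
from above gives `λ = ∏ (1 - q n) ^ 2`. Since `0 ≤ q n ≤ 1 - p 1 < 1`, the product `∏ (1 - q n)`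
is positive iff `∑ q n < ∞`: one direction by `1 - x ≤ exp (-x)`, the other by summability of
`log (1 - q n)`.
-/

open Function

section Blocks

variable {Ω ι κ : Type*} {mΩ : MeasurableSpace Ω} {μ : Measure Ω}

theorem iIndep_biSup_of_pairwise_disjoint {m : ι → MeasurableSpace Ω} (h_le : ∀ i, m i ≤ mΩ)
    (h_indep : iIndep m μ) {S : κ → Set ι} (hS : Pairwise (Disjoint on S)) :
    iIndep (fun k ↦ ⨆ i ∈ S k, m i) μ := by
  classical
  have := h_indep.isProbabilityMeasure
  rw [iIndep_iff]
  intro F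
  induction F using Finset.induction_on with
  | empty => simp
  | insert a F haF ih =>
    intro f hf
    have hmono : ∀ k ∈ F, (⨆ i ∈ S k, m i) ≤ ⨆ i ∈ ⋃ k ∈ F, S k, m i := fun k hk ↦
      iSup₂_le fun i hi ↦ le_iSup₂ (f := fun i (_ : i ∈ ⋃ k ∈ F, S k) ↦ m i) i
        (Set.mem_biUnion hk hi)
    have hdisj : Disjoint (S a) (⋃ k ∈ F, S k) :=
      Set.disjoint_iUnion₂_right.mpr fun k hk ↦ hS (ne_of_mem_of_not_mem hk haF).symm
    have hF : MeasurableSet[⨆ i ∈ ⋃ k ∈ F, S k, m i] (⋂ k ∈ F, f k) :=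
      Finset.measurableSet_biInter F fun k hk ↦
        hmono k hk _ (hf k (Finset.mem_insert_of_mem hk))
    rw [Finset.set_biInter_insert, Finset.prod_insert haF,
      ← ih fun k hk ↦ hf k (Finset.mem_insert_of_mem hk)]
    exact ((indep_iSup_of_disjoint h_le h_indep hdisj).indepSet_of_measurableSet
      (hf a (Finset.mem_insert_self a F)) hF).measure_inter_eq_mul

end Blocks

namespace Real

variable {ι : Type*}

theorem hasProd_iInf_prod {f : ι → ℝ} (h0 : ∀ i, 0 ≤ f i) (h1 : ∀ i, f i ≤ 1) :
    HasProd f (⨅ s : Finset ι, ∏ i ∈ s, f i) :=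
  tendsto_atTop_ciInf (Finset.prod_anti_set_of_le_one h0 h1)
    ⟨0, by rintro _ ⟨s, rfl⟩; exact Finset.prod_nonneg fun i _ ↦ h0 i⟩

theorem tprod_le_prod {f : ι → ℝ} (h0 : ∀ i, 0 ≤ f i) (h1 : ∀ i, f i ≤ 1) (s : Finset ι) :
    ∏' i, f i ≤ ∏ i ∈ s, f i := by
  rw [(hasProd_iInf_prod h0 h1).tprod_eq]
  exact ciInf_le ⟨0, by rintro _ ⟨s, rfl⟩; exact Finset.prod_nonneg fun i _ ↦ h0 i⟩ s

theorem tprod_one_sub_pos_iff {c : ℕ → ℝ} (h0 : ∀ n, 0 ≤ c n) (h1 : ∀ n, c n < 1) :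
    0 < ∏' n, (1 - c n) ↔ Summable c := by
  have hf0 : ∀ n, 0 ≤ 1 - c n := fun n ↦ by linarith [h1 n]
  constructor
  · intro hpos
    refine summable_of_sum_range_le (c := -log (∏' n, (1 - c n))) h0 fun N ↦ ?_
    have hexp : ∏' n, (1 - c n) ≤ exp (-∑ n ∈ Finset.range N, c n) :=
      calc ∏' n, (1 - c n) ≤ ∏ n ∈ Finset.range N, (1 - c n) :=
            tprod_le_prod hf0 (fun n ↦ by linarith [h0 n]) _
        _ ≤ ∏ n ∈ Finset.range N, exp (-c n) :=
            Finset.prod_le_prod (fun n _ ↦ hf0 n) fun n _ ↦ one_sub_le_exp_neg _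
        _ = exp (-∑ n ∈ Finset.range N, c n) := by
            rw [← exp_sum, Finset.sum_neg_distrib]
    have := log_le_log hpos hexp
    rw [log_exp] at this
    linarith
  · intro hc
    refine lt_of_le_of_ne (tprod_nonneg hf0) (Ne.symm ?_)
    simpa [sub_eq_add_neg] using
      tprod_one_add_ne_zero_of_summable (f := fun n ↦ -c n)
        (fun n ↦ by linarith [h1 n]) (by simpa using hc.abs)

end Real

theorem le_of_reflTransGen_edge {ω : Cfg} {a b : ℤ} (h : Relation.ReflTransGen (Edge ω) a b) :
    a ≤ b := by
  induction h with
  | refl => exact le_rfl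
  | tail _ hbc ih => exact ih.trans hbc.1.le

theorem forall_leads_from_iff (ω : Cfg) (a : ℤ) :
    (∀ j, a < j → Leads ω a j) ↔ ∀ j, a < j → ∃ i, a ≤ i ∧ Edge ω i j := by
  refine ⟨fun h j hj ↦ ?_, fun h ↦ ?_⟩
  · obtain ⟨i, hai, hij⟩ := Relation.TransGen.tail'_iff.mp (h j hj)
    exact ⟨i, le_of_reflTransGen_edge hai, hij⟩
  · suffices ∀ n : ℕ, ∀ j, a < j → j ≤ a + n → Leads ω a j from
      fun j hj ↦ this (j - a).toNat j hj (by omega)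
    intro n
    induction n with
    | zero => intro j hj hjn; omega
    | succ n ih =>
      intro j hj hjn
      obtain ⟨i, hai, hij⟩ := h j hj
      rcases hai.eq_or_lt with rfl | hai
      · exact .single hij
      · exact (ih i hai (by have := hij.1; omega)).tail hij

theorem forall_leads_to_iff (ω : Cfg) (a : ℤ) :
    (∀ j, j < a → Leads ω j a) ↔ ∀ j, j < a → ∃ i, i ≤ a ∧ Edge ω j i := by
  refine ⟨fun h j hj ↦ ?_, fun h ↦ ?_⟩
  · obtain ⟨i, hji, hia⟩ := Relation.TransGen.head'_iff.mp (h j hj)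
    exact ⟨i, le_of_reflTransGen_edge hia, hji⟩
  · suffices ∀ n : ℕ, ∀ j, j < a → a ≤ j + n → Leads ω j a from
      fun j hj ↦ this (a - j).toNat j hj (by omega)
    intro n
    induction n with
    | zero => intro j hj hjn; omega
    | succ n ih =>
      intro j hj hjn
      obtain ⟨i, hia, hji⟩ := h j hj
      rcases hia.eq_or_lt with rfl | hia
      · exact .single hji
      · exact .head hji (ih i hia (by have := hji.1; omega))

def hitEvent (B : Finset (ℤ × ℤ)) : Set Cfg := {ω | ∃ e ∈ B, ω e.1 e.2 = true}

theorem measurable_coord (i j : ℤ) : Measurable fun ω : Cfg ↦ ω i j := by fun_prop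

theorem hitEvent_eq_biUnion (B : Finset (ℤ × ℤ)) :
    hitEvent B = ⋃ e ∈ B, (fun ω : Cfg ↦ ω e.1 e.2) ⁻¹' {true} := by
  ext; simp [hitEvent]

theorem measurableSet_hitEvent (B : Finset (ℤ × ℤ)) : MeasurableSet (hitEvent B) := by
  rw [hitEvent_eq_biUnion]
  exact Finset.measurableSet_biUnion _ fun e _ ↦
    measurable_coord e.1 e.2 (measurableSet_singleton _)

theorem prod_one_sub_mem_Icc {p : ℕ → ℝ} (hp0 : ∀ k, 0 ≤ p k) (hp1 : ∀ k, p k ≤ 1)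
    (s : Finset ℕ) : ∏ m ∈ s, (1 - p m) ∈ Set.Icc 0 1 :=
  ⟨Finset.prod_nonneg fun m _ ↦ sub_nonneg.mpr (hp1 m),
    Finset.prod_le_one (fun m _ ↦ sub_nonneg.mpr (hp1 m)) fun m _ ↦ by linarith [hp0 m]⟩

/-- `(n, true)`: the edges into `n + 1` from `{0, …, n}`; `(n, false)`: the edges out of
`-(n + 1)` into `{-n, …, 0}`. Both are parametrised by their length `d ∈ [1, n + 1]`. -/
def levelEdges : ℕ × Bool → Finset (ℤ × ℤ)
  | (n, true) => (Finset.Icc 1 (n + 1)).image fun d : ℕ ↦ ((n : ℤ) + 1 - d, (n : ℤ) + 1)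
  | (n, false) => (Finset.Icc 1 (n + 1)).image fun d : ℕ ↦ (-((n : ℤ) + 1), (d : ℤ) - (n + 1))

theorem fst_lt_snd_of_mem_levelEdges {k : ℕ × Bool} {e : ℤ × ℤ} (he : e ∈ levelEdges k) :
    e.1 < e.2 := by
  obtain ⟨n, _ | _⟩ := k <;>
  · obtain ⟨d, hd, rfl⟩ := Finset.mem_image.mp he
    have := (Finset.mem_Icc.mp hd).1
    simp only
    omega

theorem prod_levelEdges (f : ℕ → ℝ) (k : ℕ × Bool) :
    ∏ e ∈ levelEdges k, f (e.2 - e.1).toNat = ∏ d ∈ Finset.Icc 1 (k.1 + 1), f d := by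
  obtain ⟨n, _ | _⟩ := k <;>
  · rw [levelEdges, Finset.prod_image fun d _ d' _ h ↦ by simp only [Prod.mk.injEq] at h; omega]
    refine Finset.prod_congr rfl fun d _ ↦ congrArg f ?_
    omega

theorem pairwise_disjoint_levelEdges : Pairwise (Disjoint on levelEdges) := by
  rintro ⟨n, b⟩ ⟨n', b'⟩ hne
  refine Finset.disjoint_left.mpr fun e he he' ↦ hne ?_
  cases b <;> cases b' <;>
  · obtain ⟨d, hd, rfl⟩ := Finset.mem_image.mp he
    obtain ⟨d', hd', h⟩ := Finset.mem_image.mp he'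
    simp only [Finset.mem_Icc, Prod.mk.injEq] at hd hd' h
    simp only [Prod.mk.injEq, and_true, reduceCtorEq, and_false]
    omega

theorem mem_hitEvent_levelEdges_true {ω : Cfg} {n : ℕ} :
    ω ∈ hitEvent (levelEdges (n, true)) ↔ ∃ i, 0 ≤ i ∧ Edge ω i (n + 1) := by
  simp only [hitEvent, levelEdges, Set.mem_ofPred_eq, Finset.mem_image, Finset.mem_Icc, Edge]
  constructor
  · rintro ⟨_, ⟨d, hd, rfl⟩, h⟩
    exact ⟨_, by omega, by omega, h⟩
  · rintro ⟨i, hi, hin, h⟩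
    exact ⟨(i, n + 1), ⟨(n + 1 - i).toNat, by omega, by ext <;> simp; omega⟩, h⟩

theorem mem_hitEvent_levelEdges_false {ω : Cfg} {n : ℕ} :
    ω ∈ hitEvent (levelEdges (n, false)) ↔ ∃ i, i ≤ 0 ∧ Edge ω (-(n + 1)) i := by
  simp only [hitEvent, levelEdges, Set.mem_ofPred_eq, Finset.mem_image, Finset.mem_Icc, Edge]
  constructor
  · rintro ⟨_, ⟨d, hd, rfl⟩, h⟩
    exact ⟨_, by omega, by omega, h⟩
  · rintro ⟨i, hi, hin, h⟩
    exact ⟨(-(n + 1), i), ⟨(i + n + 1).toNat, by omega, by ext <;> simp; omega⟩, h⟩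

theorem setOf_leads_inter_eq_iInter_hitEvent :
    {ω | ∀ j, 0 < j → Leads ω 0 j} ∩ {ω | ∀ j, j < 0 → Leads ω j 0} =
      ⋂ k, hitEvent (levelEdges k) := by
  ext ω
  simp only [Set.mem_inter_iff, Set.mem_ofPred_eq, Set.mem_iInter, forall_leads_from_iff,
    forall_leads_to_iff, Prod.forall, Bool.forall_bool, forall_and,
    mem_hitEvent_levelEdges_true, mem_hitEvent_levelEdges_false]
  rw [and_comm]
  refine and_congr ⟨fun h n ↦ h _ (by omega), fun h j hj ↦ ?_⟩
    ⟨fun h n ↦ h _ (by omega), fun h j hj ↦ ?_⟩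
  · obtain ⟨n, rfl⟩ : ∃ n : ℕ, j = -(n + 1) := ⟨(-j - 1).toNat, by omega⟩
    exact h n
  · obtain ⟨n, rfl⟩ : ∃ n : ℕ, j = n + 1 := ⟨(j - 1).toNat, by omega⟩
    exact h n

namespace GraphModel

variable {p : ℕ → ℝ} {μ : Measure Cfg}

theorem measure_hitEvent (hμ : GraphModel p μ) (hp0 : ∀ k, 0 ≤ p k) (hp1 : ∀ k, p k ≤ 1)
    {B : Finset (ℤ × ℤ)} (hB : ∀ e ∈ B, e.1 < e.2) :
    μ (hitEvent B) = ENNReal.ofReal (1 - ∏ e ∈ B, (1 - p (e.2 - e.1).toNat)) := by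
  obtain ⟨hprob, hind, htrue, -⟩ := hμ
  have hcoord (e : ℤ × ℤ) (b : Bool) : MeasurableSet {ω : Cfg | ω e.1 e.2 = b} :=
    measurable_coord e.1 e.2 (measurableSet_singleton b)
  have hfalse : ∀ e ∈ B,
      μ {ω : Cfg | ω e.1 e.2 = false} = ENNReal.ofReal (1 - p (e.2 - e.1).toNat) := by
    intro e he
    have : {ω : Cfg | ω e.1 e.2 = false} = {ω | ω e.1 e.2 = true}ᶜ := by ext; simp
    rw [this, prob_compl_eq_one_sub (hcoord e true), htrue _ _ (hB e he), ← ENNReal.ofReal_one,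
      ← ENNReal.ofReal_sub _ (hp0 _)]
  have hcompl : hitEvent B = (⋂ e ∈ B, {ω : Cfg | ω e.1 e.2 = false})ᶜ := by
    ext; simp [hitEvent]
  rw [hcompl, prob_compl_eq_one_sub (Finset.measurableSet_biInter _ fun e _ ↦ hcoord e false),
    hind.meas_biInter (s := fun e ↦ {ω : Cfg | ω e.1 e.2 = false})
      fun e _ ↦ ⟨{false}, trivial, rfl⟩, Finset.prod_congr rfl hfalse,
    ← ENNReal.ofReal_prod_of_nonneg fun e _ ↦ sub_nonneg.mpr (hp1 _), ← ENNReal.ofReal_one,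
    ← ENNReal.ofReal_sub _ (Finset.prod_nonneg fun e _ ↦ sub_nonneg.mpr (hp1 _))]

theorem iIndepSet_hitEvent (hμ : GraphModel p μ) {κ : Type*} {B : κ → Finset (ℤ × ℤ)}
    (hB : Pairwise (Disjoint on B)) : iIndepSet (fun k ↦ hitEvent (B k)) μ := by
  obtain ⟨-, hind, -⟩ := hμ
  let m (e : ℤ × ℤ) : MeasurableSpace Cfg :=
    MeasurableSpace.comap (fun ω : Cfg ↦ ω e.1 e.2) inferInstance
  have hblocks := iIndep_biSup_of_pairwise_disjoint (m := m)
    (fun e ↦ (measurable_coord e.1 e.2).comap_le) hind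
    (S := fun k ↦ (B k : Set (ℤ × ℤ))) fun k l hkl ↦ Finset.disjoint_coe.mpr (hB hkl)
  rw [iIndepSet_iff_iIndep]
  refine iIndep_of_iIndep_of_le hblocks fun k ↦ MeasurableSpace.generateFrom_le ?_
  rintro _ rfl
  rw [hitEvent_eq_biUnion]
  exact Finset.measurableSet_biUnion _ fun e he ↦
    le_iSup₂ (f := fun e (_ : e ∈ (B k : Set (ℤ × ℤ))) ↦ m e) e he _ ⟨{true}, trivial, rfl⟩

theorem measure_biInter_levelEdges (hμ : GraphModel p μ) (hp0 : ∀ k, 0 ≤ p k)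
    (hp1 : ∀ k, p k ≤ 1) (N : ℕ) :
    μ (⋂ k ∈ Finset.range N ×ˢ Finset.univ, hitEvent (levelEdges k)) =
      ENNReal.ofReal (∏ n ∈ Finset.range N, (1 - ∏ m ∈ Finset.Icc 1 (n + 1), (1 - p m)) ^ 2) := by
  have hlevel (k : ℕ × Bool) : μ (hitEvent (levelEdges k)) =
      ENNReal.ofReal (1 - ∏ m ∈ Finset.Icc 1 (k.1 + 1), (1 - p m)) := by
    rw [hμ.measure_hitEvent hp0 hp1 fun e ↦ fst_lt_snd_of_mem_levelEdges,
      prod_levelEdges fun d ↦ 1 - p d]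
  rw [(hμ.iIndepSet_hitEvent pairwise_disjoint_levelEdges).meas_biInter, Finset.prod_product,
    ENNReal.ofReal_prod_of_nonneg fun n _ ↦ sq_nonneg _]
  refine Finset.prod_congr rfl fun n _ ↦ ?_
  rw [Fintype.prod_bool, hlevel, hlevel, sq,
    ENNReal.ofReal_mul (sub_nonneg.mpr (prod_one_sub_mem_Icc hp0 hp1 _).2)]

theorem measure_leads_eq_tprod (hμ : GraphModel p μ) (hp0 : ∀ k, 0 ≤ p k)
    (hp1 : ∀ k, p k ≤ 1) :
    μ ({ω | ∀ j, 0 < j → Leads ω 0 j} ∩ {ω | ∀ j, j < 0 → Leads ω j 0}) =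
      ENNReal.ofReal (∏' n, (1 - ∏ m ∈ Finset.Icc 1 (n + 1), (1 - p m)) ^ 2) := by
  have := hμ.1
  have hprod := (Real.hasProd_iInf_prod (fun n ↦ sq_nonneg _) fun n ↦
    have hq := prod_one_sub_mem_Icc hp0 hp1 (Finset.Icc 1 (n + 1))
    pow_le_one₀ (sub_nonneg.mpr hq.2) (by linarith [hq.1])).multipliable.hasProd
  set C : ℕ → Set Cfg := fun N ↦ ⋂ k ∈ Finset.range N ×ˢ Finset.univ, hitEvent (levelEdges k)
  have hanti : Antitone C := fun N N' hN ↦ Set.biInter_subset_biInter_left fun k hk ↦ by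
    simp only [Finset.coe_product, Set.mem_prod, Finset.mem_coe, Finset.mem_range] at hk ⊢
    exact ⟨by omega, hk.2⟩
  have hC : ⋂ N, C N = ⋂ k, hitEvent (levelEdges k) := by
    ext ω
    simp only [C, Set.mem_iInter, Finset.mem_product, Finset.mem_range, Finset.mem_univ, and_true]
    exact ⟨fun h k ↦ h (k.1 + 1) k (by omega), fun h _ k _ ↦ h k⟩
  have hmeas (N : ℕ) : NullMeasurableSet (C N) μ :=
    (Finset.measurableSet_biInter _ fun k _ ↦ measurableSet_hitEvent _).nullMeasurableSet
  refine tendsto_nhds_unique ?_ ((ENNReal.continuous_ofReal.tendsto _).comp hprod.tendsto_prod_nat)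
  rw [setOf_leads_inter_eq_iInter_hitEvent, ← hC]
  convert tendsto_measure_iInter_atTop hmeas hanti ⟨0, measure_ne_top μ _⟩ using 1
  funext N
  exact (hμ.measure_biInter_levelEdges hp0 hp1 N).symm

end GraphModel

/-- the rate `λ = ℙ(A₀⁺ ∩ A₀⁻)` of the skeleton. -/
theorem stmt_4 (p : ℕ → ℝ) (hp : ∀ k, 0 ≤ p k ∧ p k < 1) (hp1 : 0 < p 1)
    (μ : Measure Cfg) (hmodel : GraphModel p μ) :
    (μ ({ω | ∀ j, 0 < j → Leads ω 0 j} ∩ {ω | ∀ j, j < 0 → Leads ω j 0})).toReal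
      = ∏' j : ℕ, (1 - ∏ m ∈ Finset.Icc 1 (j + 1), (1 - p m)) ^ 2 ∧
    (0 < μ ({ω | ∀ j, 0 < j → Leads ω 0 j} ∩ {ω | ∀ j, j < 0 → Leads ω j 0}) ↔
      Summable (fun k : ℕ => ∏ m ∈ Finset.Icc 1 (k + 1), (1 - p m))) := by
  have hp0 (k : ℕ) : 0 ≤ p k := (hp k).1
  have hp_le (k : ℕ) : p k ≤ 1 := (hp k).2.le
  have hq0 (n : ℕ) : 0 ≤ ∏ m ∈ Finset.Icc 1 (n + 1), (1 - p m) :=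
    (prod_one_sub_mem_Icc hp0 hp_le _).1
  have hq_lt (n : ℕ) : ∏ m ∈ Finset.Icc 1 (n + 1), (1 - p m) < 1 :=
    calc ∏ m ∈ Finset.Icc 1 (n + 1), (1 - p m) ≤ ∏ m ∈ {1}, (1 - p m) :=
          Finset.prod_le_prod_of_subset_of_le_one (by simp) (fun m _ ↦ sub_nonneg.mpr (hp_le m))
            fun m _ _ ↦ by linarith [hp0 m]
      _ < 1 := by simpa using hp1
  have hmult : Multipliable fun n ↦ 1 - ∏ m ∈ Finset.Icc 1 (n + 1), (1 - p m) :=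
    (Real.hasProd_iInf_prod (fun n ↦ sub_nonneg.mpr (hq_lt n).le)
      fun n ↦ by linarith [hq0 n]).multipliable
  rw [hmodel.measure_leads_eq_tprod hp0 hp_le, ENNReal.toReal_ofReal
    (tprod_nonneg fun n ↦ sq_nonneg _), ENNReal.ofReal_pos, hmult.tprod_pow, sq_pos_iff,
    ← (tprod_nonneg fun n ↦ sub_nonneg.mpr (hq_lt n).le).lt_iff_ne',
    Real.tprod_one_sub_pos_iff hq0 hq_lt]
  exact ⟨rfl, .rfl⟩
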